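/- arXiv:2203.11847 — 3 statements merged into one kernel-verified Lean document; each statement's English description precedes it below -/
import Mathlib

section
/- For all p, q ∈ (0,1) with p ≠ q, the minimizer x* of the function x ↦ p^x q^{1−x} + (1−p)^x (1−q)^{1−x} over [0,1] satisfies 0 < x* < 1. More precisely, the minimum value of this function over [0,1] is strictly less than 1, while the values at x = 0 and x = 1 both equal 1. -/
/-!
At the endpoints the function equals `q + (1 - q) = 1` and `p + (1 - p) = 1`. For `0 < x < 1`,
weighted AM–GM bounds each term by the corresponding convex combination,
`p ^ x * q ^ (1 - x) ≤ x * p + (1 - x) * q`, strictly since `p ≠ q`; summing the two bounds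
gives a value `< 1`. So every minimizer over `[0, 1]` lies in the interior.
-/

open Set

theorem rpow_mul_rpow_add_rpow_mul_rpow_lt_one {a b c d x : ℝ} (ha : 0 ≤ a) (hb : 0 ≤ b)
    (hc : 0 ≤ c) (hd : 0 ≤ d) (hac : a + c = 1) (hbd : b + d = 1) (hab : a ≠ b)
    (hx : x ∈ Ioo (0 : ℝ) 1) :
    a ^ x * b ^ (1 - x) + c ^ x * d ^ (1 - x) < 1 := by
  obtain ⟨hx0, hx1⟩ := hx
  have hw : x + (1 - x) = 1 := by ring
  have hab' : a ^ x * b ^ (1 - x) < x * a + (1 - x) * b :=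
    (Real.geom_mean_lt_arith_mean2_weighted_iff_of_pos hx0 (sub_pos.2 hx1) ha hb hw).2 hab
  have hcd : c ^ x * d ^ (1 - x) ≤ x * c + (1 - x) * d :=
    Real.geom_mean_le_arith_mean2_weighted hx0.le (sub_pos.2 hx1).le hc hd hw
  calc a ^ x * b ^ (1 - x) + c ^ x * d ^ (1 - x)
      < (x * a + (1 - x) * b) + (x * c + (1 - x) * d) := add_lt_add_of_lt_of_le hab' hcd
    _ = 1 := by linear_combination x * hac + (1 - x) * hbd

theorem IsMinOn.ne_of_apply_lt {α β : Type*} [Preorder β] {f : α → β} {s : Set α} {x y z : α}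
    (hmin : IsMinOn f s x) (hy : y ∈ s) (hlt : f y < f z) : x ≠ z := by
  rintro rfl
  exact (hmin hy).not_gt hlt

theorem interior_minimizer (p q : ℝ) (hp : p ∈ Ioo (0:ℝ) 1) (hq : q ∈ Ioo (0:ℝ) 1)
    (hpq : p ≠ q) :
    sInf ((fun x : ℝ => p ^ x * q ^ (1 - x) + (1 - p) ^ x * (1 - q) ^ (1 - x)) '' Icc 0 1) < 1 ∧
    (fun x : ℝ => p ^ x * q ^ (1 - x) + (1 - p) ^ x * (1 - q) ^ (1 - x)) 0 = 1 ∧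
    (fun x : ℝ => p ^ x * q ^ (1 - x) + (1 - p) ^ x * (1 - q) ^ (1 - x)) 1 = 1 ∧
    ∀ x ∈ Icc (0:ℝ) 1,
      IsMinOn (fun x : ℝ => p ^ x * q ^ (1 - x) + (1 - p) ^ x * (1 - q) ^ (1 - x))
        (Icc 0 1) x → 0 < x ∧ x < 1 := by
  obtain ⟨hp0, hp1⟩ := hp
  obtain ⟨hq0, hq1⟩ := hq
  set f : ℝ → ℝ := fun x => p ^ x * q ^ (1 - x) + (1 - p) ^ x * (1 - q) ^ (1 - x)
  have hf0 : f 0 = 1 := by simp [f]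
  have hf1 : f 1 = 1 := by simp [f]
  have hhalf_mem : (1 / 2 : ℝ) ∈ Icc (0 : ℝ) 1 := by norm_num
  have hhalf : f (1 / 2) < 1 :=
    rpow_mul_rpow_add_rpow_mul_rpow_lt_one hp0.le hq0.le (by linarith) (by linarith)
      (by ring) (by ring) hpq (by norm_num)
  have hbdd : BddBelow (f '' Icc 0 1) := by
    refine ⟨0, ?_⟩
    rintro _ ⟨x, -, rfl⟩
    have : 0 < 1 - p := by linarith
    have : 0 < 1 - q := by linarith
    positivity
  refine ⟨csInf_lt_of_lt hbdd (mem_image_of_mem f hhalf_mem) hhalf, hf0, hf1, ?_⟩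
  rintro x ⟨hx0, hx1⟩ hmin
  exact ⟨hx0.lt_of_ne (hmin.ne_of_apply_lt hhalf_mem (hhalf.trans_eq hf0.symm)).symm,
    hx1.lt_of_ne (hmin.ne_of_apply_lt hhalf_mem (hhalf.trans_eq hf1.symm))⟩
end

section
/- Let 0 < b < a. For any t > a and x ∈ [0,1], define g(t,x) = t − a^x b^{1−x} − (t−a)^x (t−b)^{1−x}. Then for each fixed x ∈ [0,1], g(t,x) is nonincreasing in t on (a, ∞); in particular its partial derivative in t, 1 − x·((t−b)/(t−a))^{1−x} − (1−x)·((t−a)/(t−b))^x, is ≤ 0. -/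
open Set

/-! With `r = (t - b) / (t - a)`, the `t`-derivative of `g` is `1 - (x r^(1-x) + (1-x) r^(-x))`.
The two numbers `r^(1-x)` and `r^(-x)` have weighted geometric mean `r^(x(1-x)) r^(-x(1-x)) = 1`,
so by weighted AM–GM their weighted arithmetic mean is at least `1` and the derivative is
nonpositive on `(a, ∞)`. -/

lemma one_le_mul_rpow_add_mul_inv_rpow {r x : ℝ} (hr : 0 < r) (hx : x ∈ Icc (0 : ℝ) 1) :
    1 ≤ x * r ^ (1 - x) + (1 - x) * r⁻¹ ^ x := by
  obtain ⟨hx0, hx1⟩ := hx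
  have hgeom : (r ^ (1 - x)) ^ x * (r⁻¹ ^ x) ^ (1 - x) = 1 := by
    rw [← Real.rpow_mul hr.le, Real.inv_rpow hr.le, ← Real.rpow_neg hr.le,
      ← Real.rpow_mul hr.le, ← Real.rpow_add hr, show (1 - x) * x + -x * (1 - x) = 0 by ring,
      Real.rpow_zero]
  calc (1 : ℝ) = (r ^ (1 - x)) ^ x * (r⁻¹ ^ x) ^ (1 - x) := hgeom.symm
    _ ≤ x * r ^ (1 - x) + (1 - x) * r⁻¹ ^ x :=
      Real.geom_mean_le_arith_mean2_weighted hx0 (sub_nonneg.mpr hx1) (by positivity)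
        (by positivity) (add_sub_cancel x 1)

lemma hasDerivAt_sub_rpow_mul_sub_rpow {a b t : ℝ} (x : ℝ) (ha : a < t) (hb : b < t) :
    HasDerivAt (fun s : ℝ => (s - a) ^ x * (s - b) ^ (1 - x))
      (x * ((t - b) / (t - a)) ^ (1 - x) + (1 - x) * ((t - a) / (t - b)) ^ x) t := by
  have hta : 0 < t - a := sub_pos.mpr ha
  have htb : 0 < t - b := sub_pos.mpr hb
  have hderiv := (((hasDerivAt_id t).sub_const a).rpow_const (p := x) (Or.inl hta.ne')).mul
    (((hasDerivAt_id t).sub_const b).rpow_const (p := 1 - x) (Or.inl htb.ne'))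
  refine hderiv.congr_deriv ?_
  simp only [id, one_mul]
  rw [Real.div_rpow htb.le hta.le, Real.div_rpow hta.le htb.le,
    show x - 1 = -(1 - x) by ring, show 1 - x - 1 = -x by ring,
    Real.rpow_neg hta.le, Real.rpow_neg htb.le]
  ring

theorem g_antitone_in_t_general (a b x : ℝ) (hba : b < a) (hx : x ∈ Icc (0:ℝ) 1) :
    AntitoneOn (fun t : ℝ => t - a ^ x * b ^ (1 - x) - (t - a) ^ x * (t - b) ^ (1 - x))
      (Ioi a) ∧
    ∀ t : ℝ, a < t →
      1 - x * ((t - b) / (t - a)) ^ (1 - x) - (1 - x) * ((t - a) / (t - b)) ^ x ≤ 0 := by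
  have hderiv_nonpos : ∀ t : ℝ, a < t →
      1 - x * ((t - b) / (t - a)) ^ (1 - x) - (1 - x) * ((t - a) / (t - b)) ^ x ≤ 0 := by
    intro t ht
    have hratio : 0 < (t - b) / (t - a) := div_pos (by linarith) (by linarith)
    have hamgm := one_le_mul_rpow_add_mul_inv_rpow hratio hx
    rw [inv_div] at hamgm
    linarith
  have hderiv : ∀ t ∈ Ioi a, HasDerivAt
      (fun t : ℝ => t - a ^ x * b ^ (1 - x) - (t - a) ^ x * (t - b) ^ (1 - x))
      (1 - (x * ((t - b) / (t - a)) ^ (1 - x) + (1 - x) * ((t - a) / (t - b)) ^ x)) t :=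
    fun t ht => ((hasDerivAt_id t).sub_const _).sub
      (hasDerivAt_sub_rpow_mul_sub_rpow x ht (hba.trans ht))
  refine ⟨antitoneOn_of_hasDerivWithinAt_nonpos (convex_Ioi a)
    (f' := fun t => 1 - (x * ((t - b) / (t - a)) ^ (1 - x) + (1 - x) * ((t - a) / (t - b)) ^ x))
    (fun t ht => (hderiv t ht).continuousAt.continuousWithinAt) ?_ ?_, hderiv_nonpos⟩
  · rw [interior_Ioi]
    exact fun t ht => (hderiv t ht).hasDerivWithinAt
  · rw [interior_Ioi]
    exact fun t ht => by linarith [hderiv_nonpos t ht]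

theorem g_antitone_in_t (a b x : ℝ) (hb : 0 < b) (hba : b < a) (hx : x ∈ Icc (0:ℝ) 1) :
    AntitoneOn (fun t : ℝ => t - a ^ x * b ^ (1 - x) - (t - a) ^ x * (t - b) ^ (1 - x))
      (Ioi a) ∧
    ∀ t : ℝ, a < t →
      1 - x * ((t - b) / (t - a)) ^ (1 - x) - (1 - x) * ((t - a) / (t - b)) ^ x ≤ 0 :=
  g_antitone_in_t_general a b x hba hx
end

section
/- Let 0 < b < a. Then lim_{t → a⁺} max_{x∈[0,1]} (t − a^x b^{1−x} − (t−a)^x (t−b)^{1−x}) = a − b. -/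
/-!
For `t > a` and `x ∈ [0, 1]` the expression is at most `t - b`, because the weighted geometric
mean `a ^ x * b ^ (1 - x)` is at least `b` and the one of `t - a` and `t - b` is nonnegative;
this bound tends to `a - b`. Conversely, for fixed `x > 0` the expression tends to
`a - a ^ x * b ^ (1 - x)` as `t → a⁺`, since `(t - a) ^ x → 0`, and this tends to `a - b`
as `x → 0⁺`.
-/

open Set Filter Topology

noncomputable section

def weightedGeomMean (w u v : ℝ) : ℝ := u ^ w * v ^ (1 - w)

def geomMeanGap (a b t x : ℝ) : ℝ :=
  t - weightedGeomMean x a b - weightedGeomMean x (t - a) (t - b)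

end

section WeightedGeomMean

variable {w u v : ℝ}

lemma weightedGeomMean_zero_weight (u v : ℝ) : weightedGeomMean 0 u v = v := by
  simp [weightedGeomMean]

lemma weightedGeomMean_zero_left (hw : w ≠ 0) (v : ℝ) : weightedGeomMean w 0 v = 0 := by
  simp [weightedGeomMean, Real.zero_rpow hw]

lemma weightedGeomMean_nonneg (hu : 0 ≤ u) (hv : 0 ≤ v) : 0 ≤ weightedGeomMean w u v :=
  mul_nonneg (Real.rpow_nonneg hu w) (Real.rpow_nonneg hv (1 - w))

lemma le_weightedGeomMean (hv : 0 < v) (hvu : v ≤ u) (hw : 0 ≤ w) :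
    v ≤ weightedGeomMean w u v := by
  calc v = v ^ w * v ^ (1 - w) := by rw [← Real.rpow_add hv, add_sub_cancel, Real.rpow_one]
    _ ≤ u ^ w * v ^ (1 - w) := by gcongr

lemma continuous_weightedGeomMean_weight (hu : u ≠ 0) (hv : v ≠ 0) :
    Continuous fun w => weightedGeomMean w u v := by
  unfold weightedGeomMean
  fun_prop (disch := assumption)

end WeightedGeomMean

section GeomMeanGap

variable {a b t x : ℝ}

lemma geomMeanGap_le (hb : 0 < b) (hba : b ≤ a) (hat : a ≤ t) (hx : 0 ≤ x) :
    geomMeanGap a b t x ≤ t - b := by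
  have h₁ := le_weightedGeomMean hb hba hx
  have h₂ := weightedGeomMean_nonneg (w := x) (sub_nonneg.2 hat) (sub_nonneg.2 (hba.trans hat))
  unfold geomMeanGap
  linarith

lemma sSup_geomMeanGap_le (hb : 0 < b) (hba : b ≤ a) (hat : a ≤ t) :
    sSup (geomMeanGap a b t '' Icc 0 1) ≤ t - b :=
  csSup_le ((nonempty_Icc.2 zero_le_one).image _)
    (forall_mem_image.2 fun _ hx => geomMeanGap_le hb hba hat hx.1)

lemma geomMeanGap_le_sSup (hb : 0 < b) (hba : b ≤ a) (hat : a ≤ t) (hx : x ∈ Icc 0 1) :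
    geomMeanGap a b t x ≤ sSup (geomMeanGap a b t '' Icc 0 1) :=
  le_csSup ⟨t - b, forall_mem_image.2 fun _ hy => geomMeanGap_le hb hba hat hy.1⟩
    (mem_image_of_mem _ hx)

lemma tendsto_geomMeanGap_nhdsGT (hba : b < a) (hx : 0 < x) :
    Tendsto (fun t => geomMeanGap a b t x) (𝓝[>] a) (𝓝 (a - weightedGeomMean x a b)) := by
  have hcont : ContinuousAt (fun t => geomMeanGap a b t x) a := by
    unfold geomMeanGap weightedGeomMean
    have hab : a - b ≠ 0 := sub_ne_zero.2 hba.ne'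
    fun_prop (disch := first | exact Or.inr hx.le | exact Or.inl hab)
  have hval : geomMeanGap a b a x = a - weightedGeomMean x a b := by
    rw [geomMeanGap, sub_self, weightedGeomMean_zero_left hx.ne', sub_zero]
  exact hval ▸ hcont.tendsto.mono_left nhdsWithin_le_nhds

lemma exists_lt_sub_weightedGeomMean {c : ℝ} (hb : 0 < b) (hba : b < a) (hc : c < a - b) :
    ∃ x ∈ Ioc (0 : ℝ) 1, c < a - weightedGeomMean x a b := by
  have hlim : Tendsto (fun x => a - weightedGeomMean x a b) (𝓝[>] 0) (𝓝 (a - b)) := by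
    have := (continuous_weightedGeomMean_weight (hb.trans hba).ne' hb.ne').tendsto 0
    rw [weightedGeomMean_zero_weight] at this
    exact (this.const_sub a).mono_left nhdsWithin_le_nhds
  have hIoc : ∀ᶠ x in 𝓝[>] (0 : ℝ), x ∈ Ioc 0 1 := Ioc_mem_nhdsGT zero_lt_one
  exact (hIoc.and (hlim.eventually (lt_mem_nhds hc))).exists

end GeomMeanGap

theorem max_g_tendsto_right (a b : ℝ) (hb : 0 < b) (hba : b < a) :
    Tendsto
      (fun t : ℝ => sSup ((fun x : ℝ =>
        t - a ^ x * b ^ (1 - x) - (t - a) ^ x * (t - b) ^ (1 - x)) '' Icc 0 1))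
      (nhdsWithin a (Ioi a)) (nhds (a - b)) := by
  change Tendsto (fun t => sSup (geomMeanGap a b t '' Icc 0 1)) (𝓝[>] a) (𝓝 (a - b))
  rw [tendsto_order]
  refine ⟨fun c hc => ?_, fun c hc => ?_⟩
  · obtain ⟨x, hx, hcx⟩ := exists_lt_sub_weightedGeomMean hb hba hc
    filter_upwards [(tendsto_geomMeanGap_nhdsGT hba hx.1).eventually (lt_mem_nhds hcx),
      self_mem_nhdsWithin] with t hct hat
    exact hct.trans_le (geomMeanGap_le_sSup hb hba.le (le_of_lt hat) (Ioc_subset_Icc_self hx))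
  · have hnear : ∀ᶠ t in 𝓝[>] a, t - b < c :=
      nhdsWithin_le_nhds ((continuous_sub_right b).continuousAt.eventually (gt_mem_nhds hc))
    filter_upwards [hnear, self_mem_nhdsWithin] with t htc hat
    exact (sSup_geomMeanGap_le hb hba.le (le_of_lt hat)).trans_lt htc
end
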